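/- arXiv:2003.00701 — 4 statements merged into one kernel-verified Lean document; each statement's English description precedes it below -/
import Mathlib

section
/- Let λ > 0, 0 ≤ E < 1, set λ₊ = √(1+E)·√λ/2 and I = [−λ₊, λ₊]. Let R : I → ℝ be continuous and satisfy |R(x) − ((−1+λ)x − 4x³)| ≤ E·λ·|x| for all x ∈ I. Set λ₋ = √(1−E)·√λ/2, W₋ = [−λ₊, −λ₋], W₊ = [λ₋, λ₊]. Then R(λ₋) ≥ −λ₋ and R(λ₊) ≤ −λ₊, so by the intermediate value theorem W₋ ⊆ R(W₊); symmetrically W₊ ⊆ R(W₋). Consequently there exist x₊ ∈ W₊ and x₋ ∈ W₋ with R(x₊) = x₋ and R(x₋) = x₊, i.e. R has a 2-periodic orbit alternating between W₋ and W₊. -/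
/-!
At the window endpoints `±λ₋`, `±λ₊` the identity `λ - 4x² = ±Eλ` turns the normal form into
`-x ± Eλx`, so the error bound fixes the sign of `R x + x` there; the intermediate value theorem
then gives the two covering relations `W₊ → W₋ → W₊`. Taking first and last hitting times inside
`W₊` yields a closed interval `K ⊆ W₊` with `R(K) = W₋`, hence `R(R(K)) = R(W₋) ⊇ W₊ ⊇ K`, and
`R ∘ R` has a fixed point in `K`.
-/

open Set

section IntervalCovering

variable {α δ : Type*} [LinearOrder δ]

theorem mem_uIcc_or_mem_uIcc_of_notMem_uIcc {c d z : δ} (h : z ∉ uIcc c d) :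
    d ∈ uIcc c z ∨ c ∈ uIcc z d := by
  simp only [mem_uIcc] at *
  grind

variable [ConditionallyCompleteLinearOrder α] [TopologicalSpace α] [OrderTopology α]
  [DenselyOrdered α] [TopologicalSpace δ] [OrderClosedTopology δ] {f : α → δ} {a b : α}

theorem uIcc_subset_image_Icc (hab : a ≤ b) (hf : ContinuousOn f (Icc a b)) :
    uIcc (f a) (f b) ⊆ f '' Icc a b := by
  rcases le_total (f a) (f b) with h | h
  · exact uIcc_of_le h ▸ intermediate_value_Icc hab hf
  · exact uIcc_of_ge h ▸ intermediate_value_Icc' hab hf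

theorem image_Icc_eq_uIcc_of_forall_eq_imp (hab : a ≤ b) (hf : ContinuousOn f (Icc a b))
    (ha : ∀ y ∈ Icc a b, f y = f a → y = a) (hb : ∀ y ∈ Icc a b, f y = f b → y = b) :
    f '' Icc a b = uIcc (f a) (f b) := by
  refine (uIcc_subset_image_Icc hab hf).antisymm' ?_
  rintro _ ⟨x, hx, rfl⟩
  by_contra hfx
  rcases mem_uIcc_or_mem_uIcc_of_notMem_uIcc hfx with hd | hc
  · obtain ⟨y, hy, hfy⟩ := uIcc_subset_image_Icc hx.1 (hf.mono (Icc_subset_Icc_right hx.2)) hd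
    have hyx : y = x := hy.2.antisymm (hb y (Icc_subset_Icc_right hx.2 hy) hfy ▸ hx.2)
    exact hfx (hyx ▸ hfy ▸ right_mem_uIcc)
  · obtain ⟨y, hy, hfy⟩ := uIcc_subset_image_Icc hx.2 (hf.mono (Icc_subset_Icc_left hx.1)) hc
    have hyx : y = x := hy.1.antisymm' (ha y (Icc_subset_Icc_left hx.1 hy) hfy ▸ hx.1)
    exact hfx (hyx ▸ hfy ▸ left_mem_uIcc)

theorem exists_Icc_subset_image_eq_uIcc (hab : a ≤ b) (hf : ContinuousOn f (Icc a b)) :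
    ∃ a' b', a' ≤ b' ∧ Icc a' b' ⊆ Icc a b ∧ f '' Icc a' b' = uIcc (f a) (f b) := by
  -- `b'` is the first time `f` takes the value `f b`, `a'` the last time before it takes `f a`.
  set S := Icc a b ∩ f ⁻¹' {f b}
  have hS : sInf S ∈ S :=
    (hf.preimage_isClosed_of_isClosed isClosed_Icc isClosed_singleton).csInf_mem
      ⟨b, right_mem_Icc.2 hab, rfl⟩ ⟨a, fun _ hy ↦ hy.1.1⟩
  set b' := sInf S
  set T := Icc a b' ∩ f ⁻¹' {f a}
  have hT : sSup T ∈ T :=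
    ((hf.mono (Icc_subset_Icc_right hS.1.2)).preimage_isClosed_of_isClosed isClosed_Icc
      isClosed_singleton).csSup_mem ⟨a, left_mem_Icc.2 hS.1.1, rfl⟩ ⟨b', fun _ hy ↦ hy.1.2⟩
  set a' := sSup T
  have hsub : Icc a' b' ⊆ Icc a b := Icc_subset_Icc hT.1.1 hS.1.2
  refine ⟨a', b', hT.1.2, hsub, ?_⟩
  rw [← show f a' = f a from hT.2, ← show f b' = f b from hS.2]
  refine image_Icc_eq_uIcc_of_forall_eq_imp hT.1.2 (hf.mono hsub)
    (fun y hy hfy ↦ ?_) (fun y hy hfy ↦ ?_)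
  · exact hy.1.antisymm' (le_csSup ⟨b', fun _ hz ↦ hz.1.2⟩ ⟨⟨(hsub hy).1, hy.2⟩, hfy.trans hT.2⟩)
  · exact hy.2.antisymm (csInf_le ⟨a, fun _ hz ↦ hz.1.1⟩ ⟨hsub hy, hfy.trans hS.2⟩)

theorem exists_Icc_subset_image_eq_Icc {c d : δ} (hf : ContinuousOn f (Icc a b)) (hcd : c ≤ d)
    (h : Icc c d ⊆ f '' Icc a b) :
    ∃ a' b', a' ≤ b' ∧ Icc a' b' ⊆ Icc a b ∧ f '' Icc a' b' = Icc c d := by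
  obtain ⟨p, hp, rfl⟩ := h (left_mem_Icc.2 hcd)
  obtain ⟨q, hq, rfl⟩ := h (right_mem_Icc.2 hcd)
  rw [← uIcc_of_le hcd]
  rcases le_total p q with hpq | hqp
  · obtain ⟨a', b', hab', hsub, himage⟩ :=
      exists_Icc_subset_image_eq_uIcc hpq (hf.mono (Icc_subset_Icc hp.1 hq.2))
    exact ⟨a', b', hab', hsub.trans (Icc_subset_Icc hp.1 hq.2), himage⟩
  · obtain ⟨a', b', hab', hsub, himage⟩ :=
      exists_Icc_subset_image_eq_uIcc hqp (hf.mono (Icc_subset_Icc hq.1 hp.2))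
    exact ⟨a', b', hab', hsub.trans (Icc_subset_Icc hq.1 hp.2), uIcc_comm (f q) (f p) ▸ himage⟩

end IntervalCovering

theorem abs_add_sub_mul_le {lam E s x y : ℝ} (hx : lam - 4 * x ^ 2 = s)
    (h : |y - ((-1 + lam) * x - 4 * x ^ 3)| ≤ E * lam * |x|) : |y + x - s * x| ≤ E * lam * |x| := by
  convert h using 2
  linear_combination x * hx

theorem window_endpoint_bounds {lam E lm lp : ℝ} {R : ℝ → ℝ} (hlm0 : 0 ≤ lm) (hlmp : lm ≤ lp)
    (hlm : lam - 4 * lm ^ 2 = E * lam) (hlp : lam - 4 * lp ^ 2 = -E * lam)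
    (hR : ∀ x ∈ Icc (-lp) lp, |R x - ((-1 + lam) * x - 4 * x ^ 3)| ≤ E * lam * |x|) :
    -lm ≤ R lm ∧ R lp ≤ -lp ∧ R (-lm) ≤ lm ∧ lp ≤ R (-lp) := by
  have h1 := abs_le.1 (abs_add_sub_mul_le hlm (hR lm ⟨by linarith, hlmp⟩))
  have h2 := abs_le.1 (abs_add_sub_mul_le hlp (hR lp ⟨by linarith, le_rfl⟩))
  have h3 := abs_le.1 (abs_add_sub_mul_le (neg_sq lm ▸ hlm) (hR (-lm) ⟨by linarith, by linarith⟩))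
  have h4 := abs_le.1 (abs_add_sub_mul_le (neg_sq lp ▸ hlp) (hR (-lp) ⟨le_rfl, by linarith⟩))
  simp only [abs_neg, abs_of_nonneg hlm0, abs_of_nonneg (hlm0.trans hlmp)] at h1 h2 h3 h4
  exact ⟨by linarith [h1.1], by linarith [h2.2], by linarith [h3.2], by linarith [h4.1]⟩

/-- **Proposition 4.1(i).** If `R` is continuous on `I = [−λ₊, λ₊]` with
`|R(x) − ((−1+λ)x − 4x³)| ≤ Eλ|x|`, where `λ₊ = √(1+E)√λ/2`, then `R(λ₋) ≥ −λ₋`,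
`R(λ₊) ≤ −λ₊`, `W₋ ⊆ R(W₊)` and `W₊ ⊆ R(W₋)`, and `R` has a 2-periodic orbit alternating
between `W₋ = [−λ₊, −λ₋]` and `W₊ = [λ₋, λ₊]`, with `λ₋ = √(1−E)√λ/2`. -/
theorem stmt8 (lam E : ℝ) (hlam : 0 < lam) (hE0 : 0 ≤ E) (hE1 : E < 1)
    (R : ℝ → ℝ)
    (lp lm : ℝ) (hlp : lp = Real.sqrt (1 + E) * Real.sqrt lam / 2)
    (hlm : lm = Real.sqrt (1 - E) * Real.sqrt lam / 2)
    (hRcont : ContinuousOn R (Set.Icc (-lp) lp))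
    (hRerr : ∀ x ∈ Set.Icc (-lp) lp,
      |R x - ((-1 + lam) * x - 4 * x ^ 3)| ≤ E * lam * |x|) :
    R lm ≥ -lm ∧ R lp ≤ -lp ∧
    Set.Icc (-lp) (-lm) ⊆ R '' Set.Icc lm lp ∧
    Set.Icc lm lp ⊆ R '' Set.Icc (-lp) (-lm) ∧
    ∃ xp ∈ Set.Icc lm lp, ∃ xm ∈ Set.Icc (-lp) (-lm), R xp = xm ∧ R xm = xp := by
  have hlm0 : 0 ≤ lm := by rw [hlm]; positivity
  have hlmp : lm ≤ lp := by rw [hlm, hlp]; gcongr; linarith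
  have hlm2 : lam - 4 * lm ^ 2 = E * lam := by
    rw [hlm, div_pow, mul_pow, Real.sq_sqrt (by linarith), Real.sq_sqrt hlam.le]; ring
  have hlp2 : lam - 4 * lp ^ 2 = -E * lam := by
    rw [hlp, div_pow, mul_pow, Real.sq_sqrt (by linarith), Real.sq_sqrt hlam.le]; ring
  obtain ⟨hRlm, hRlp, hRnlm, hRnlp⟩ := window_endpoint_bounds hlm0 hlmp hlm2 hlp2 hRerr
  have hWp : Icc lm lp ⊆ Icc (-lp) lp := Icc_subset_Icc (by linarith) le_rfl
  have hWm : Icc (-lp) (-lm) ⊆ Icc (-lp) lp := Icc_subset_Icc le_rfl (by linarith)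
  have hcovm : Icc (-lp) (-lm) ⊆ R '' Icc lm lp :=
    (Icc_subset_Icc hRlp hRlm).trans (intermediate_value_Icc' hlmp (hRcont.mono hWp))
  have hcovp : Icc lm lp ⊆ R '' Icc (-lp) (-lm) :=
    (Icc_subset_Icc hRnlm hRnlp).trans (intermediate_value_Icc' (neg_le_neg hlmp) (hRcont.mono hWm))
  refine ⟨hRlm, hRlp, hcovm, hcovp, ?_⟩
  obtain ⟨a, b, hab, hK, hRK⟩ :=
    exists_Icc_subset_image_eq_Icc (hRcont.mono hWp) (neg_le_neg hlmp) hcovm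
  have hcont : ContinuousOn (R ∘ R) (Icc a b) :=
    (hRcont.mono hWm).comp (hRcont.mono (hK.trans hWp)) (hRK ▸ mapsTo_image R _)
  have hsurj : SurjOn (R ∘ R) (Icc a b) (Icc a b) := by
    rw [SurjOn, image_comp, hRK]; exact hK.trans hcovp
  obtain ⟨xp, hxp, hfix⟩ := exists_mem_Icc_isFixedPt_of_surjOn hcont hab hsurj
  exact ⟨xp, hK hxp, R xp, hRK ▸ mem_image_of_mem R hxp, rfl, hfix⟩
end

section
/- Let 0 ≤ E < 1/2 and 0 < λ < 4/3. Suppose x ∈ ℝ satisfies 0 < 4x² < (1 − E)λ, and γ ∈ ℝ satisfies |γ| ≤ Eλ. Then |(−1 + λ)x − 4x³ + γx| < |x|. -/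
/-!
Writing `μ = λ + γ`, the map factors as `x ↦ (μ - 1 - 4x²) x`, so it shrinks `|x|` exactly when
`0 < μ - 4x² < 2`. The lower bound holds because `γ ≥ -Eλ` and `4x² < (1 - E)λ`; the upper one
because `μ ≤ (1 + E)λ < (3/2)(4/3) = 2`.
-/

theorem abs_neg_one_add_mul_sub_cube_lt_abs {μ x : ℝ} (hx : x ≠ 0)
    (hμ₀ : 4 * x ^ 2 < μ) (hμ₂ : μ < 2) :
    |(-1 + μ) * x - 4 * x ^ 3| < |x| := by
  have factor : (-1 + μ) * x - 4 * x ^ 3 = (μ - 4 * x ^ 2 - 1) * x := by ring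
  rw [factor, abs_mul]
  refine mul_lt_of_lt_one_left (abs_pos.mpr hx) (abs_lt.mpr ⟨?_, ?_⟩) <;> linarith [sq_nonneg x]

theorem four_mul_sq_lt_add_of_abs_le {E lam x γ : ℝ}
    (hx : 4 * x ^ 2 < (1 - E) * lam) (hγ : |γ| ≤ E * lam) :
    4 * x ^ 2 < lam + γ := by
  linarith [neg_abs_le γ]

theorem add_lt_two_of_abs_le {E lam γ : ℝ} (hE : E < 1 / 2)
    (hlam0 : 0 < lam) (hlam : lam < 4 / 3) (hγ : |γ| ≤ E * lam) :
    lam + γ < 2 := by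
  have hEl : E * lam < 1 / 2 * lam := mul_lt_mul_of_pos_right hE hlam0
  linarith [le_abs_self γ]

theorem stmt9_general (E lam x γ : ℝ) (hE : E < 1 / 2)
    (hlam0 : 0 < lam) (hlam : lam < 4 / 3)
    (hx0 : 0 < 4 * x ^ 2) (hx : 4 * x ^ 2 < (1 - E) * lam)
    (hγ : |γ| ≤ E * lam) :
    |(-1 + lam) * x - 4 * x ^ 3 + γ * x| < |x| := by
  have hx_ne : x ≠ 0 := by
    rintro rfl
    norm_num at hx0
  have key := abs_neg_one_add_mul_sub_cube_lt_abs hx_ne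
    (four_mul_sq_lt_add_of_abs_le hx hγ) (add_lt_two_of_abs_le hE hlam0 hlam hγ)
  convert key using 2
  ring

/-- For `0 ≤ E < 1/2`, `0 < λ < 4/3`, `0 < 4x² < (1 − E)λ` and `|γ| ≤ Eλ`,
one has `|(−1 + λ)x − 4x³ + γx| < |x|`. -/
theorem stmt9 (E lam x γ : ℝ) (hE0 : 0 ≤ E) (hE : E < 1 / 2)
    (hlam0 : 0 < lam) (hlam : lam < 4 / 3)
    (hx0 : 0 < 4 * x ^ 2) (hx : 4 * x ^ 2 < (1 - E) * lam)
    (hγ : |γ| ≤ E * lam) :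
    |(-1 + lam) * x - 4 * x ^ 3 + γ * x| < |x| :=
  stmt9_general E lam x γ hE hlam0 hlam hx0 hx hγ
end

section
/- Let 0 ≤ E < 1/2 and 0 < λ < 4/3 and suppose R : ℝ → ℝ is a continuous injective map with R(0) = 0 satisfying |R'(x) − (−1 + λ − 12x²)| ≤ Eλ wherever differentiable on I_λ = [−√(1+E)√λ/2, √(1+E)√λ/2], and R is differentiable on I_λ. If x₋ < 0 < x₊ and x'₋ < 0 < x'₊ are two 2-periodic orbits of R with x₋, x'₋ ∈ [−√(1+E)√λ/2, −√(1−E)√λ/2] and x₊, x'₊ ∈ [√(1−E)√λ/2, √(1+E)√λ/2], then x₋ = x'₋ and x₊ = x'₊ (the alternating 2-periodic orbit in these windows is unique). -/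
/-!
On both windows the derivative bound forces `R' < -1`, so `x ↦ R x + x` is strictly decreasing
there. For a 2-cycle `a ↦ b ↦ a` this function takes the value `a + b` at both points. If
`b' < b` for a second cycle `a' ↦ b' ↦ a'`, monotonicity on the window of `b` gives
`a + b < a' + b'`, hence `a < a'`, and then monotonicity on the window of `a` gives the reverse
inequality.
-/

open Set

section TwoCycle

variable {f : ℝ → ℝ} {A B : Set ℝ} {a b a' b' : ℝ}

theorem le_of_two_cycle_of_strictAntiOn_add_id (hA : StrictAntiOn (fun x => f x + x) A)
    (hB : StrictAntiOn (fun x => f x + x) B) (ha : a ∈ A) (hb : b ∈ B) (ha' : a' ∈ A)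
    (hb' : b' ∈ B) (hfa : f a = b) (hfb : f b = a) (hfa' : f a' = b') (hfb' : f b' = a') :
    b ≤ b' := by
  by_contra! hlt
  have hsum : a + b < a' + b' := by simpa only [hfb, hfb'] using hB hb' hb hlt
  have hsum' : b' + a' < b + a := by simpa only [hfa, hfa'] using hA ha ha' (by linarith)
  linarith

theorem two_cycle_unique_of_strictAntiOn_add_id (hA : StrictAntiOn (fun x => f x + x) A)
    (hB : StrictAntiOn (fun x => f x + x) B) (ha : a ∈ A) (hb : b ∈ B) (ha' : a' ∈ A)
    (hb' : b' ∈ B) (hfa : f a = b) (hfb : f b = a) (hfa' : f a' = b') (hfb' : f b' = a') :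
    a = a' ∧ b = b' := by
  have hbb' : b = b' := le_antisymm
    (le_of_two_cycle_of_strictAntiOn_add_id hA hB ha hb ha' hb' hfa hfb hfa' hfb')
    (le_of_two_cycle_of_strictAntiOn_add_id hA hB ha' hb' ha hb hfa' hfb' hfa hfb)
  exact ⟨by rw [← hfb, ← hfb', hbb'], hbb'⟩

end TwoCycle

theorem strictAntiOn_add_id_of_deriv_lt_neg_one {f : ℝ → ℝ} {D : Set ℝ} (hD : Convex ℝ D)
    (hf : ContinuousOn f D) (hdf : ∀ x ∈ interior D, DifferentiableAt ℝ f x)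
    (hf' : ∀ x ∈ interior D, deriv f x < -1) : StrictAntiOn (fun x => f x + x) D := by
  refine strictAntiOn_of_deriv_neg hD (hf.add continuousOn_id) fun x hx => ?_
  rw [deriv_fun_add (hdf x hx) differentiableAt_fun_id, deriv_id'']
  linarith [hf' x hx]

theorem lt_neg_one_of_abs_sub_le {E lam d x : ℝ} (hE : E < 1 / 2) (hlam0 : 0 < lam)
    (hd : |d - (-1 + lam - 12 * x ^ 2)| ≤ E * lam) (hx : (1 - E) * lam / 4 ≤ x ^ 2) :
    d < -1 := by
  calc d ≤ -1 + lam - 12 * x ^ 2 + E * lam := by linarith [(abs_le.mp hd).2]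
    _ ≤ -1 - (2 - 4 * E) * lam := by linarith
    _ < -1 := by nlinarith

theorem stmt11_general (E lam : ℝ) (hE : E < 1 / 2)
    (hlam0 : 0 < lam)
    (R : ℝ → ℝ) (hRcont : Continuous R)
    (lp lm : ℝ)
    (hlm : lm = Real.sqrt (1 - E) * Real.sqrt lam / 2)
    (hRdiff : ∀ x ∈ Set.Icc (-lp) lp, DifferentiableAt ℝ R x)
    (hRderiv : ∀ x ∈ Set.Icc (-lp) lp, |deriv R x - (-1 + lam - 12 * x ^ 2)| ≤ E * lam)
    (xm xp xm' xp' : ℝ)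
    (hxm : xm ∈ Set.Icc (-lp) (-lm)) (hxp : xp ∈ Set.Icc lm lp)
    (hxm' : xm' ∈ Set.Icc (-lp) (-lm)) (hxp' : xp' ∈ Set.Icc lm lp)
    (horb : R xm = xp ∧ R xp = xm) (horb' : R xm' = xp' ∧ R xp' = xm') :
    xm = xm' ∧ xp = xp' := by
  have hlm0 : 0 ≤ lm := by rw [hlm]; positivity
  have hlm_sq : lm ^ 2 = (1 - E) * lam / 4 := by
    rw [hlm, div_pow, mul_pow, Real.sq_sqrt (by linarith), Real.sq_sqrt hlam0.le]
    norm_num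
  have hanti : ∀ a b, -lp ≤ a → b ≤ lp → (∀ x ∈ Icc a b, lm ^ 2 ≤ x ^ 2) →
      StrictAntiOn (fun x => R x + x) (Icc a b) := by
    intro a b ha hb hsq
    have hsub : Icc a b ⊆ Icc (-lp) lp := Icc_subset_Icc ha hb
    refine strictAntiOn_add_id_of_deriv_lt_neg_one (convex_Icc a b) hRcont.continuousOn
      (fun x hx => hRdiff x (hsub (interior_subset hx))) fun x hx => ?_
    replace hx := interior_subset hx
    exact lt_neg_one_of_abs_sub_le hE hlam0 (hRderiv x (hsub hx)) (hlm_sq ▸ hsq x hx)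
  have hlp0 : 0 ≤ lp := hlm0.trans (hxp.1.trans hxp.2)
  have hneg := hanti (-lp) (-lm) le_rfl (by linarith) fun x hx => by nlinarith [hx.2]
  have hpos := hanti lm lp (by linarith) le_rfl fun x hx => pow_le_pow_left₀ hlm0 hx.1 2
  exact two_cycle_unique_of_strictAntiOn_add_id hneg hpos hxm hxp hxm' hxp'
    horb.1 horb.2 horb'.1 horb'.2

/-- **Proposition 4.1(ii), uniqueness.** With `0 ≤ E < 1/2`, `0 < λ < 4/3`,
`R : ℝ → ℝ` continuous, injective, `R(0) = 0`, differentiable on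
`I_λ = [−√(1+E)√λ/2, √(1+E)√λ/2]` with `|R'(x) − (−1 + λ − 12x²)| ≤ Eλ` there, any two
2-periodic orbits alternating between the windows
`[−√(1+E)√λ/2, −√(1−E)√λ/2]` and `[√(1−E)√λ/2, √(1+E)√λ/2]` coincide. -/
theorem stmt11 (E lam : ℝ) (hE0 : 0 ≤ E) (hE : E < 1 / 2)
    (hlam0 : 0 < lam) (hlam : lam < 4 / 3)
    (R : ℝ → ℝ) (hRcont : Continuous R) (hRinj : Function.Injective R) (hR0 : R 0 = 0)
    (lp lm : ℝ) (hlp : lp = Real.sqrt (1 + E) * Real.sqrt lam / 2)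
    (hlm : lm = Real.sqrt (1 - E) * Real.sqrt lam / 2)
    (hRdiff : ∀ x ∈ Set.Icc (-lp) lp, DifferentiableAt ℝ R x)
    (hRderiv : ∀ x ∈ Set.Icc (-lp) lp, |deriv R x - (-1 + lam - 12 * x ^ 2)| ≤ E * lam)
    (xm xp xm' xp' : ℝ)
    (hxm : xm ∈ Set.Icc (-lp) (-lm)) (hxp : xp ∈ Set.Icc lm lp)
    (hxm' : xm' ∈ Set.Icc (-lp) (-lm)) (hxp' : xp' ∈ Set.Icc lm lp)
    (hxm0 : xm < 0) (hxp0 : 0 < xp) (hxm'0 : xm' < 0) (hxp'0 : 0 < xp')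
    (horb : R xm = xp ∧ R xp = xm) (horb' : R xm' = xp' ∧ R xp' = xm') :
    xm = xm' ∧ xp = xp' :=
  stmt11_general E lam hE hlam0 R hRcont lp lm hlm hRdiff hRderiv xm xp xm' xp' hxm hxp hxm' hxp'
    horb horb'
end

section
/- Let λ > 0, 0 ≤ E_R, E_K, set λ₊ = √(1+E_R)√λ/2 and P_K(λ,x) = −2λx − 2x² + 8x³. Suppose k : [−λ₊, λ₊] → ℝ satisfies |k(x) − P_K(λ, x)| ≤ 2E_K λ |x| for all x. Then for all x ∈ [−λ₊, λ₊], k(x) ≥ min over x ∈ [−λ₊, λ₊] of (P_K(λ,x) − 2E_K λ |x|), and under the additional constraints 0 ≤ E_R < 1/2, 0 ≤ E_K ≤ 9/2, 0 ≤ λ < 1/43, this minimum is attained at x = −λ₊, giving k(x) ≥ −(λ/2)(1 + E_R + 2E_R√((1+E_R)λ) + 2E_K√((1+E_R)λ)). -/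
/-!
`P_K(λ, x) − P_K(λ, −ℓ) = (x + ℓ)(8ℓ² − 2λ + (ℓ − x)(2 − 8x))`, and every factor is nonnegative
on `[−ℓ, ℓ]` as soon as `λ ≤ 4ℓ²` and `ℓ ≤ 1/4`. For `ℓ = λ₊` both conditions follow from
`4λ₊² = (1 + E_R)λ` and the smallness of `λ`. The penalty `−2E_Kλ|x|` is also smallest at the
endpoints, so `P_K − 2E_Kλ|·|` is minimal at `−λ₊`, and `k` lies above it.
-/

open Set

def taylorK (lam x : ℝ) : ℝ := -2 * lam * x - 2 * x ^ 2 + 8 * x ^ 3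

theorem taylorK_sub_taylorK_neg (lam l x : ℝ) :
    taylorK lam x - taylorK lam (-l) = (x + l) * (8 * l ^ 2 - 2 * lam + (l - x) * (2 - 8 * x)) := by
  unfold taylorK
  ring

theorem taylorK_neg_le {lam l x : ℝ} (hlam : lam ≤ 4 * l ^ 2) (hl : l ≤ 1 / 4)
    (hx : x ∈ Icc (-l) l) : taylorK lam (-l) ≤ taylorK lam x := by
  obtain ⟨hlx, hxl⟩ := hx
  have hfactor : 0 ≤ (x + l) * (8 * l ^ 2 - 2 * lam + (l - x) * (2 - 8 * x)) :=
    mul_nonneg (by linarith) (add_nonneg (by linarith) (mul_nonneg (by linarith) (by linarith)))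
  linarith [taylorK_sub_taylorK_neg lam l x]

theorem taylorK_sub_mul_abs_le {lam l x c : ℝ} (hc : 0 ≤ c) (hlam : lam ≤ 4 * l ^ 2)
    (hl : l ≤ 1 / 4) (hx : x ∈ Icc (-l) l) :
    taylorK lam (-l) - c * |-l| ≤ taylorK lam x - c * |x| := by
  have habs : |x| ≤ |-l| := by
    rw [abs_neg, abs_of_nonneg (a := l) (by linarith [hx.1, hx.2])]
    exact abs_le.mpr hx
  linarith [taylorK_neg_le hlam hl hx, mul_le_mul_of_nonneg_left habs hc]

theorem taylorK_neg_half_sub {lam ER EK s : ℝ} (hs : 0 ≤ s) (hs2 : s ^ 2 = (1 + ER) * lam) :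
    taylorK lam (-(s / 2)) - 2 * EK * lam * |-(s / 2)|
      = -(lam / 2) * (1 + ER + 2 * ER * s + 2 * EK * s) := by
  rw [abs_neg, abs_of_nonneg (by positivity)]
  unfold taylorK
  linear_combination (-1 / 2 - s) * hs2

/-- **lower bound of Proposition 4.2.** If
`|k(x) − P_K(λ,x)| ≤ 2E_Kλ|x|` on `[−λ₊, λ₊]` with `λ₊ = √(1+E_R)√λ/2` and
`P_K(λ,x) = −2λx − 2x² + 8x³`, then `k(x)` is bounded below on `[−λ₊, λ₊]` by the minimum
of `P_K(λ,·) − 2E_Kλ|·|` there; and if moreover `E_R < 1/2`, `E_K ≤ 9/2`, `λ < 1/43`, this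
minimum is attained at `x = −λ₊`, giving
`k(x) ≥ −(λ/2)(1 + E_R + 2E_R√((1+E_R)λ) + 2E_K√((1+E_R)λ))`. -/
theorem stmt12 (lam ER EK : ℝ) (hlam : 0 < lam) (hER : 0 ≤ ER) (hEK : 0 ≤ EK)
    (lp : ℝ) (hlp : lp = Real.sqrt (1 + ER) * Real.sqrt lam / 2)
    (PK : ℝ → ℝ) (hPK : PK = fun x => -2 * lam * x - 2 * x ^ 2 + 8 * x ^ 3)
    (k : ℝ → ℝ)
    (hk : ∀ x ∈ Set.Icc (-lp) lp, |k x - PK x| ≤ 2 * EK * lam * |x|) :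
    (∀ x ∈ Set.Icc (-lp) lp,
      k x ≥ sInf ((fun t => PK t - 2 * EK * lam * |t|) '' Set.Icc (-lp) lp)) ∧
    (ER < 1 / 2 → EK ≤ 9 / 2 → lam < 1 / 43 →
      (∀ t ∈ Set.Icc (-lp) lp,
        PK (-lp) - 2 * EK * lam * |(-lp)| ≤ PK t - 2 * EK * lam * |t|) ∧
      (∀ x ∈ Set.Icc (-lp) lp,
        k x ≥ -(lam / 2) * (1 + ER + 2 * ER * Real.sqrt ((1 + ER) * lam)
          + 2 * EK * Real.sqrt ((1 + ER) * lam)))) := by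
  obtain rfl : PK = taylorK lam := hPK
  obtain rfl : lp = Real.sqrt ((1 + ER) * lam) / 2 := by rw [hlp, Real.sqrt_mul (by linarith)]
  set s := Real.sqrt ((1 + ER) * lam)
  have hs2 : s ^ 2 = (1 + ER) * lam := Real.sq_sqrt (by positivity)
  have hk_lower : ∀ x ∈ Icc (-(s / 2)) (s / 2), taylorK lam x - 2 * EK * lam * |x| ≤ k x :=
    fun x hx => by linarith [(abs_sub_le_iff.mp (hk x hx)).2]
  refine ⟨fun x hx => (csInf_le (isCompact_Icc.bddBelow_image (by unfold taylorK; fun_prop))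
    (mem_image_of_mem _ hx)).trans (hk_lower x hx), fun hER' _ hlam' => ?_⟩
  have hlam_le : lam ≤ 4 * (s / 2) ^ 2 := by nlinarith
  have hs_le : s / 2 ≤ 1 / 4 := by
    have : s ≤ 1 / 2 := Real.sqrt_le_iff.mpr ⟨by norm_num, by nlinarith⟩
    linarith
  have hmin : ∀ t ∈ Icc (-(s / 2)) (s / 2), taylorK lam (-(s / 2)) - 2 * EK * lam * |-(s / 2)|
      ≤ taylorK lam t - 2 * EK * lam * |t| :=
    fun t ht => taylorK_sub_mul_abs_le (by positivity) hlam_le hs_le ht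
  refine ⟨hmin, fun x hx => ?_⟩
  rw [← taylorK_neg_half_sub (Real.sqrt_nonneg _) hs2]
  exact (hmin x hx).trans (hk_lower x hx)
end
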